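/- For all integers 1 ≤ M ≤ L, every t ∈ ℝ, every f ∈ 𝒞 and every k ∈ ℕ, the seminorm of the difference of the regularized dynamics of a satisfies p_{f,k}((F_L(t) − F_M(t)) a) ≤ 2 Σ_{s=M+1}^{L+1} f(s−1) s^{k+1/2}. -/

import Mathlib

open Filter Topology
open scoped ENNReal

noncomputable section

/-- The boson Hilbert space `H = ℓ²(ℕ, ℂ)`. -/
abbrev Hb : Type := lp (fun _ : ℕ => ℂ) 2

/-- The standard orthonormal basis vectors `e n` of `H`. -/
def eb (n : ℕ) : Hb := lp.single 2 n (1 : ℂ)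

/-- The dense subspace `D` of finitely supported linear combinations of the `e n`,
modelled as finitely supported sequences. -/
abbrev Db : Type := ℕ →₀ ℂ

/-- The inclusion `D → H`. -/
def incl : Db →ₗ[ℂ] Hb := Finsupp.linearCombination ℂ eb

/-- The annihilation operator `a : D → D`, `a e₀ = 0`, `a eₙ = √n e_{n-1}`. -/
def aOp : Db →ₗ[ℂ] Db :=
  Finsupp.lsum ℂ fun n => (Real.sqrt n : ℂ) • Finsupp.lsingle (n - 1)

/-- The creation operator `a† : D → D`, `a† eₙ = √(n+1) e_{n+1}`. -/
def adOp : Db →ₗ[ℂ] Db :=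
  Finsupp.lsum ℂ fun n => (Real.sqrt (n + 1) : ℂ) • Finsupp.lsingle (n + 1)

/-- The number operator `N = a† a` on `D`. -/
def ND : Db →ₗ[ℂ] Db := adOp ∘ₗ aOp

/-- The projection `Π_l` restricted to `D`. -/
def PiD (l : ℕ) : Db →ₗ[ℂ] Db :=
  Finsupp.lsum ℂ fun n => if n = l then Finsupp.lsingle n else 0

/-- `Q_L = Σ_{l=0}^L Π_l` on `D`. -/
def QD (L : ℕ) : Db →ₗ[ℂ] Db := ∑ l ∈ Finset.range (L + 1), PiD l

/-- The orthogonal projection `Π_l` of `H` onto `ℂ e_l`. -/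
def PiH (l : ℕ) : Hb →L[ℂ] Hb := (innerSL ℂ (eb l)).smulRight (eb l)

/-- `Q_L = Σ_{l=0}^L Π_l` on `H`. -/
def QH (L : ℕ) : Hb →L[ℂ] Hb := ∑ l ∈ Finset.range (L + 1), PiH l

/-- For a linear map `T : D → H`, the bounded operator `Π_l T Π_s` on `H`
(it is `x ↦ ⟪e_s, x⟫ • Π_l (T e_s)`, of rank at most one). -/
def sandwich (T : Db →ₗ[ℂ] Hb) (l s : ℕ) : Hb →L[ℂ] Hb :=
  (innerSL ℂ (eb s)).smulRight (PiH l (T (Finsupp.single s 1)))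

/-- Membership in the set `𝒞` of positive, bounded, continuous functions on `[0,∞)`
decreasing faster than any inverse power. -/
structure IsC (f : ℝ → ℝ) : Prop where
  cont : ContinuousOn f (Set.Ici (0 : ℝ))
  bdd : ∃ B : ℝ, ∀ x ∈ Set.Ici (0 : ℝ), f x ≤ B
  pos : ∀ x ∈ Set.Ici (0 : ℝ), 0 < f x
  decay : ∀ n : ℕ, Tendsto (fun x : ℝ => x ^ n * f x) atTop (nhds 0)

/-- The seminorm `p_{f,k}(T) = Σ_{l,s} f(l) s^k ‖Π_l T Π_s‖ ∈ [0,∞]`. -/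
def semin (f : ℝ → ℝ) (k : ℕ) (T : Db →ₗ[ℂ] Hb) : ℝ≥0∞ :=
  ∑' (l : ℕ) (s : ℕ), ENNReal.ofReal (f l * (s : ℝ) ^ k * ‖sandwich T l s‖)

end

noncomputable section

/-- The bounded operator `F_L(t) = 1 - Q_L + e^{itL} Π_L + e^{-it} Q_{L-1}` on `H`. -/
def FL (L : ℕ) (t : ℝ) : Hb →L[ℂ] Hb :=
  1 - QH L + Complex.exp ((t : ℂ) * Complex.I * (L : ℂ)) • PiH L
    + Complex.exp (-((t : ℂ) * Complex.I)) • QH (L - 1)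


section Aux

lemma inner_eb (m n : ℕ) : (inner ℂ (eb m) (eb n) : ℂ) = if m = n then 1 else 0 := by
  rw [eb, lp.inner_single_left]
  simp [eb, lp.single_apply, Pi.single_apply, eq_comm]

lemma norm_eb (n : ℕ) : ‖eb n‖ = 1 := by
  have := lp.norm_single (p := 2) (E := fun _ : ℕ => ℂ) (by norm_num) n (1:ℂ)
  simpa [eb] using this

lemma PiH_eb (l n : ℕ) : PiH l (eb n) = (if l = n then (1:ℂ) else 0) • eb l := by
  simp [PiH, inner_eb]

lemma QH_eb (L n : ℕ) : QH L (eb n) = if n ≤ L then eb n else 0 := by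
  simp only [QH, ContinuousLinearMap.sum_apply, PiH_eb]
  rw [Finset.sum_congr rfl (fun l _ => by rw [ite_smul, one_smul, zero_smul])]
  by_cases h : n ≤ L
  · rw [Finset.sum_ite_eq' (Finset.range (L+1)) n (fun l => eb l)]
    simp [Nat.lt_succ_iff.mpr h, h]
  · rw [Finset.sum_ite_eq' (Finset.range (L+1)) n (fun l => eb l)]
    simp [h, Nat.lt_succ_iff]

lemma aOp_single (s : ℕ) :
    aOp (Finsupp.single s 1) = (Real.sqrt s : ℂ) • Finsupp.single (s-1) 1 := by
  simp [aOp, Finsupp.lsum_single]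

lemma incl_single (n : ℕ) : incl (Finsupp.single n 1) = eb n := by
  simp [incl]

def coefL (L : ℕ) (t : ℝ) (n : ℕ) : ℂ :=
  1 - (if n ≤ L then 1 else 0) + (if L = n then Complex.exp ((t:ℂ) * Complex.I * L) else 0)
    + (if n ≤ L - 1 then Complex.exp (-((t:ℂ) * Complex.I)) else 0)

lemma FL_eb (L : ℕ) (t : ℝ) (n : ℕ) : FL L t (eb n) = coefL L t n • eb n := by
  simp only [FL, ContinuousLinearMap.add_apply, ContinuousLinearMap.sub_apply,
    ContinuousLinearMap.smul_apply, ContinuousLinearMap.one_apply, PiH_eb, QH_eb, coefL,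
    add_smul, sub_smul, one_smul]
  congr 1
  · congr 1
    · by_cases h : n ≤ L <;> simp [h]
    · by_cases h : L = n <;> simp [h, smul_smul]
  · by_cases h : n ≤ L - 1 <;> simp [h]

lemma norm_coefL (L : ℕ) (hL : 1 ≤ L) (t : ℝ) (n : ℕ) : ‖coefL L t n‖ = 1 := by
  unfold coefL
  rcases lt_trichotomy n L with h | h | h
  · have h1 : n ≤ L := h.le
    have h2 : n ≤ L - 1 := Nat.le_sub_one_of_lt h
    have h3 : ¬ (L = n) := by omega
    simp [h1, h2, h3, Complex.norm_exp]
  · subst h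
    have h2 : ¬ (n ≤ n - 1) := by omega
    simp [h2, Complex.norm_exp]
  · have h1 : ¬ (n ≤ L) := by omega
    have h2 : ¬ (n ≤ L - 1) := by omega
    have h3 : ¬ (L = n) := by omega
    simp [h1, h2, h3]

lemma coefL_eq (M L : ℕ) (hML : M ≤ L) (t : ℝ) (n : ℕ) (h : n < M ∨ L < n) :
    coefL L t n = coefL M t n := by
  unfold coefL
  rcases h with h | h
  · have := Nat.le_sub_one_of_lt (h.trans_le hML)
    have := Nat.le_sub_one_of_lt h
    have h1 : n ≤ L := by omega
    have h2 : n ≤ M := by omega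
    have h3 : ¬ (L = n) := by omega
    have h4 : ¬ (M = n) := by omega
    simp [h1, h2, h3, h4, *]
  · have h1 : ¬ (n ≤ L) := by omega
    have h2 : ¬ (n ≤ M) := by omega
    have h3 : ¬ (L = n) := by omega
    have h4 : ¬ (M = n) := by omega
    have h5 : ¬ (n ≤ L - 1) := by omega
    have h6 : ¬ (n ≤ M - 1) := by omega
    simp [h1, h2, h3, h4, h5, h6]

lemma sandwich_norm (M L : ℕ) (t : ℝ) (l s : ℕ) :
    ‖sandwich ((FL L t - FL M t).toLinearMap ∘ₗ incl ∘ₗ aOp) l s‖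
      = Real.sqrt s * ‖coefL L t (s-1) - coefL M t (s-1)‖ * (if l = s - 1 then 1 else 0) := by
  have hT : ((FL L t - FL M t).toLinearMap ∘ₗ incl ∘ₗ aOp) (Finsupp.single s 1)
      = ((Real.sqrt s : ℂ) * (coefL L t (s-1) - coefL M t (s-1))) • eb (s-1) := by
    simp only [LinearMap.comp_apply, aOp_single, map_smul, incl_single,
      ContinuousLinearMap.coe_coe, ContinuousLinearMap.sub_apply, FL_eb, ← sub_smul, smul_smul]
  rw [sandwich, ContinuousLinearMap.norm_smulRight_apply, innerSL_apply_norm, norm_eb, one_mul,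
    hT, map_smul, PiH_eb]
  rw [norm_smul, norm_smul, norm_eb, mul_one, norm_mul, Complex.norm_real,
    Real.norm_eq_abs, abs_of_nonneg (Real.sqrt_nonneg _)]
  by_cases h : l = s - 1 <;> simp [h, mul_assoc]

end Aux

/-- for all `1 ≤ M ≤ L`, `t ∈ ℝ`, `f ∈ 𝒞` and `k ∈ ℕ`,
`p_{f,k}((F_L(t) - F_M(t)) a) ≤ 2 Σ_{s=M+1}^{L+1} f(s-1) s^{k+1/2}`. -/
theorem stmt7 (M L : ℕ) (hM : 1 ≤ M) (hML : M ≤ L) (t : ℝ)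
    (f : ℝ → ℝ) (hf : IsC f) (k : ℕ) :
    semin f k ((FL L t - FL M t).toLinearMap ∘ₗ incl ∘ₗ aOp)
      ≤ ENNReal.ofReal
          (2 * ∑ s ∈ Finset.Icc (M + 1) (L + 1),
            f ((s : ℝ) - 1) * (s : ℝ) ^ ((k : ℝ) + 1 / 2)) := by
  set T := (FL L t - FL M t).toLinearMap ∘ₗ incl ∘ₗ aOp with hT
  set c : ℕ → ℝ≥0∞ := fun l =>
    if l + 1 ∈ Finset.Icc (M+1) (L+1)
      then ENNReal.ofReal (2 * (f l * ((l:ℝ)+1) ^ k * Real.sqrt ((l:ℝ)+1))) else 0 with hc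
  have hfnn : ∀ x : ℝ, 0 ≤ x → 0 ≤ f x := fun x hx => (hf.pos x hx).le
  have hbound : ∀ l s : ℕ,
      ENNReal.ofReal (f l * (s : ℝ) ^ k * ‖sandwich T l s‖)
        ≤ if s = l + 1 then c l else 0 := by
    intro l s
    by_cases hsl : s = l + 1
    · subst hsl
      rw [if_pos rfl, hc]; dsimp only
      by_cases hmem : l + 1 ∈ Finset.Icc (M+1) (L+1)
      · rw [if_pos hmem]
        have hnorm : ‖sandwich T l (l+1)‖
            = Real.sqrt ((l:ℝ)+1) * ‖coefL L t l - coefL M t l‖ := by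
          rw [hT, sandwich_norm M L t l (l+1)]
          have h0 : l = l + 1 - 1 := by omega
          push_cast
          simp [← h0]
        have hd : ‖coefL L t l - coefL M t l‖ ≤ 2 := by
          calc ‖coefL L t l - coefL M t l‖ ≤ ‖coefL L t l‖ + ‖coefL M t l‖ := norm_sub_le _ _
          _ = 2 := by rw [norm_coefL L (hM.trans hML) t l, norm_coefL M hM t l]; norm_num
        apply ENNReal.ofReal_le_ofReal
        rw [hnorm]
        have hfl : 0 ≤ f l := hfnn l (Nat.cast_nonneg l)
        have h1 : ((l+1 : ℕ):ℝ) = (l:ℝ)+1 := by push_cast; ring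
        rw [h1, mul_assoc]
        calc f l * (((l:ℝ)+1) ^ k * (Real.sqrt ((l:ℝ)+1) * ‖coefL L t l - coefL M t l‖))
            ≤ f l * (((l:ℝ)+1) ^ k * (Real.sqrt ((l:ℝ)+1) * 2)) := by
              apply mul_le_mul_of_nonneg_left _ hfl
              apply mul_le_mul_of_nonneg_left _ (by positivity)
              exact mul_le_mul_of_nonneg_left hd (Real.sqrt_nonneg _)
          _ = 2 * (f l * ((l:ℝ)+1) ^ k * Real.sqrt ((l:ℝ)+1)) := by ring
      · rw [if_neg hmem]
        have hl : l < M ∨ L < l := by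
          simp only [Finset.mem_Icc] at hmem; omega
        have hz : ‖sandwich T l (l+1)‖ = 0 := by
          rw [hT, sandwich_norm M L t l (l+1)]
          have h0 : l + 1 - 1 = l := by omega
          rw [h0, coefL_eq M L hML t l hl, sub_self, norm_zero]
          ring
        rw [hz, mul_zero, ENNReal.ofReal_zero]
    · rw [if_neg hsl]
      have hz : ‖sandwich T l s‖ = 0 := by
        rw [hT, sandwich_norm M L t l s]
        rcases Nat.eq_zero_or_pos s with hs | hs
        · simp [hs]
        · have hls : l ≠ s - 1 := by omega
          simp [hls]
      rw [hz, mul_zero, ENNReal.ofReal_zero]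
  calc semin f k T
      ≤ ∑' (l : ℕ) (s : ℕ), (if s = l + 1 then c l else 0) :=
        ENNReal.tsum_le_tsum fun l => ENNReal.tsum_le_tsum fun s => hbound l s
    _ = ∑' (l : ℕ), c l := tsum_congr fun l => tsum_ite_eq (l+1) (fun _ => c l)
    _ = ∑ l ∈ Finset.Icc M L, c l := by
        refine tsum_eq_sum fun l hl => ?_
        rw [hc]
        have h2 : l + 1 ∉ Finset.Icc (M+1) (L+1) := by
          simp only [Finset.mem_Icc] at hl ⊢; omega
        simp [h2]
    _ = ∑ l ∈ Finset.Icc M L,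
          ENNReal.ofReal (2 * (f l * ((l:ℝ)+1) ^ k * Real.sqrt ((l:ℝ)+1))) := by
        refine Finset.sum_congr rfl fun l hl => ?_
        rw [hc]
        have h2 : l + 1 ∈ Finset.Icc (M+1) (L+1) := by
          simp only [Finset.mem_Icc] at hl ⊢; omega
        simp [h2]
    _ = ENNReal.ofReal (∑ l ∈ Finset.Icc M L,
          2 * (f l * ((l:ℝ)+1) ^ k * Real.sqrt ((l:ℝ)+1))) := by
        rw [ENNReal.ofReal_sum_of_nonneg]
        intro l hl
        have hfl : 0 ≤ f l := hfnn l (Nat.cast_nonneg l)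
        positivity
    _ = ENNReal.ofReal
          (2 * ∑ s ∈ Finset.Icc (M + 1) (L + 1),
            f ((s : ℝ) - 1) * (s : ℝ) ^ ((k : ℝ) + 1 / 2)) := by
        congr 1
        rw [Finset.mul_sum]
        refine Finset.sum_nbij' (fun l => l + 1) (fun s => s - 1) ?_ ?_ ?_ ?_ ?_
        · intro l hl; simp only [Finset.mem_Icc] at hl ⊢; omega
        · intro s hs; simp only [Finset.mem_Icc] at hs ⊢; omega
        · intro l hl; omega
        · intro s hs; simp only [Finset.mem_Icc] at hs; omega
        · intro l hl
          have h1 : ((l + 1 : ℕ):ℝ) = (l:ℝ) + 1 := by push_cast; ring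
          rw [h1]
          have hx : (0:ℝ) < (l:ℝ) + 1 := by positivity
          rw [show ((l:ℝ) + 1 - 1) = (l:ℝ) by ring,
            Real.rpow_add hx, Real.rpow_natCast, ← Real.sqrt_eq_rpow]
          ring

end
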